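/- Let α be a finite type with decidable equality, let g be a permutation of α, and let f be a permutation of α × Bool lifting g (i.e. (f (a,b)).1 = g a for all a, b). Let a : α and set ℓ(a) = Function.minimalPeriod g a. If f swaps the fiber over a, i.e. (f ^ ℓ(a)) (a, true) ≠ (a, true), then for every b : Bool one has Function.minimalPeriod f (a, b) = 2 * ℓ(a), and moreover (a, true) and (a, false) lie in the same cycle of f, i.e. f.SameCycle (a, true) (a, false). -/

import Mathlib

/-! The return map `f ^ ℓ` preserves the two-point fiber over `a`; as it moves `(a, true)`, it
swaps the fiber, so it has minimal period exactly `2` at `(a, b)`. Since `ℓ` divides the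
`f`-period of `(a, b)` (project to `α`), that period is `2 ℓ`. -/

open Function

theorem Function.Semiconj.minimalPeriod_dvd {α β : Type*} {π : α → β} {f : α → α} {g : β → β}
    (h : Semiconj π f g) (x : α) : minimalPeriod g (π x) ∣ minimalPeriod f x :=
  ((isPeriodicPt_minimalPeriod f x).map h).minimalPeriod_dvd

theorem Function.minimalPeriod_eq_two_mul {α : Type*} {f : α → α} {x : α} {l : ℕ}
    (hl : l ∣ minimalPeriod f x) (h2 : IsPeriodicPt f^[l] 2 x) (hne : ¬IsFixedPt f^[l] x) :
    minimalPeriod f x = 2 * l := by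
  have hl0 : l ≠ 0 := by
    rintro rfl
    exact hne rfl
  have h := minimalPeriod_iterate_eq_div_gcd (f := f) (x := x) hl0
  rw [minimalPeriod_eq_prime h2 hne, Nat.gcd_eq_right hl] at h
  exact (Nat.div_eq_iff_eq_mul_left (Nat.pos_of_ne_zero hl0) hl).mp h.symm

theorem Bool.apply_eq_not_of_injective {f : Bool → Bool} (hf : Injective f)
    (ht : f true ≠ true) (b : Bool) : f b = !b := by
  have hft : f true = false := by simpa using ht
  cases b
  · simpa [hft] using hf.ne Bool.false_ne_true
  · exact hft

theorem Function.Injective.apply_mk_eq_mk_not {α : Type*} {σ : α × Bool → α × Bool}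
    (hσ : Injective σ) {a : α} (hfib : ∀ b, (σ (a, b)).1 = a) (hswap : σ (a, true) ≠ (a, true))
    (b : Bool) : σ (a, b) = (a, !b) := by
  have hsnd : Injective fun c => (σ (a, c)).2 := fun c c' h =>
    congrArg Prod.snd (hσ (Prod.ext ((hfib c).trans (hfib c').symm) h))
  refine Prod.ext (hfib b) (Bool.apply_eq_not_of_injective hsnd (fun ht => hswap ?_) b)
  exact Prod.ext (hfib true) ht

theorem lift_swapping_fiber_gives_single_double_cycle_general
    {α : Type*}
    (g : Equiv.Perm α) (f : Equiv.Perm (α × Bool))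
    (hf : ∀ (a : α) (b : Bool), (f (a, b)).1 = g a)
    (a : α)
    (hswap : (f ^ Function.minimalPeriod g a) (a, true) ≠ (a, true)) :
    (∀ b : Bool, Function.minimalPeriod f (a, b) = 2 * Function.minimalPeriod g a) ∧
    f.SameCycle (a, true) (a, false) := by
  set l := minimalPeriod g a
  have hsemi : Semiconj Prod.fst f g := fun x => hf x.1 x.2
  have hfib : ∀ b, ((f ^ l) (a, b)).1 = a := fun b => by
    rw [Equiv.Perm.coe_pow, hsemi.iterate_right l (a, b), ← Equiv.Perm.coe_pow]
    exact iterate_minimalPeriod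
  have hflip := (f ^ l).injective.apply_mk_eq_mk_not hfib hswap
  refine ⟨fun b => minimalPeriod_eq_two_mul (hsemi.minimalPeriod_dvd (a, b)) ?_ ?_, l, hflip true⟩
  · simp [IsPeriodicPt, IsFixedPt, ← Equiv.Perm.coe_pow, hflip]
  · simp [IsFixedPt, ← Equiv.Perm.coe_pow, hflip]

theorem lift_swapping_fiber_gives_single_double_cycle
    {α : Type*} [Fintype α] [DecidableEq α]
    (g : Equiv.Perm α) (f : Equiv.Perm (α × Bool))
    (hf : ∀ (a : α) (b : Bool), (f (a, b)).1 = g a)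
    (a : α)
    (hswap : (f ^ Function.minimalPeriod g a) (a, true) ≠ (a, true)) :
    (∀ b : Bool, Function.minimalPeriod f (a, b) = 2 * Function.minimalPeriod g a) ∧
    f.SameCycle (a, true) (a, false) :=
  lift_swapping_fiber_gives_single_double_cycle_general g f hf a hswap
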